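/- arXiv:1507.03065 — 6 statements merged into one kernel-verified Lean document; each statement's English description precedes it below -/
import Mathlib

section
/- For every a > 0, as x → 0⁺ the values F(x, ax) of the minimal RS flip-flop map along the ray y = ax converge to the point (a/(1+a), 1/(1+a)), which is the intersection of the line ξ+η = 1 with the ray η = ξ/a; in particular the limit of F at the origin along rays depends on the slope a, so F has no continuous extension to (0,0). -/
open Set Filter Topology

/-- The minimal RS flip-flop map. -/
noncomputable def F (p : ℝ × ℝ) : ℝ × ℝ :=
  (p.2 * (1 - p.1) / (p.1 + p.2 - p.1 * p.2),
   p.1 * (1 - p.2) / (p.1 + p.2 - p.1 * p.2))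

/-- The domain X = [0,1]² minus the two corners (0,0) and (1,1). -/
def X : Set (ℝ × ℝ) :=
  (Icc (0:ℝ) 1 ×ˢ Icc (0:ℝ) 1) \ {((0:ℝ), (0:ℝ)), ((1:ℝ), (1:ℝ))}

lemma ray_tendsto (a : ℝ) (ha : 0 < a) :
    Tendsto (fun x : ℝ => F (x, a * x)) (𝓝[>] (0:ℝ))
      (𝓝 ((a / (1 + a), 1 / (1 + a)) : ℝ × ℝ)) := by
  have hd : (1:ℝ) + a - a * 0 ≠ 0 := by nlinarith
  have hc : ContinuousAt
      (fun x : ℝ => ((a * (1 - x) / (1 + a - a * x), (1 - a * x) / (1 + a - a * x)) : ℝ × ℝ))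
      0 := by
    apply ContinuousAt.prodMk
    · exact (continuousAt_const.mul (by fun_prop)).div (by fun_prop) hd
    · exact (by fun_prop : ContinuousAt (fun x : ℝ => 1 - a * x) 0).div (by fun_prop) hd
  have htend := hc.tendsto.mono_left (nhdsWithin_le_nhds : 𝓝[>] (0:ℝ) ≤ 𝓝 0)
  have hval : ((a * (1 - (0:ℝ)) / (1 + a - a * 0), (1 - a * 0) / (1 + a - a * 0)) : ℝ × ℝ)
      = ((a / (1 + a), 1 / (1 + a)) : ℝ × ℝ) := by norm_num
  rw [hval] at htend
  refine htend.congr' ?_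
  filter_upwards [self_mem_nhdsWithin] with x hx
  have hx0 : x ≠ 0 := ne_of_gt hx
  simp only [F]
  have e1 : x + a * x - x * (a * x) = x * (1 + a - a * x) := by ring
  have e2 : a * x * (1 - x) = x * (a * (1 - x)) := by ring
  have e3 : x * (1 - a * x) = x * (1 - a * x) := rfl
  rw [e1, e2, mul_div_mul_left _ _ hx0, mul_div_mul_left _ _ hx0]

lemma ray_to_X (a : ℝ) (ha : 0 < a) :
    Tendsto (fun x : ℝ => ((x, a * x) : ℝ × ℝ)) (𝓝[>] (0:ℝ))
      (𝓝[X] ((0:ℝ), (0:ℝ))) := by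
  rw [tendsto_nhdsWithin_iff]
  constructor
  · have : Tendsto (fun x : ℝ => ((x, a * x) : ℝ × ℝ)) (𝓝 0) (𝓝 ((0:ℝ), (0:ℝ))) := by
      have h : Continuous (fun x : ℝ => ((x, a * x) : ℝ × ℝ)) := by fun_prop
      simpa using h.tendsto (0:ℝ)
    exact this.mono_left nhdsWithin_le_nhds
  · have hmem : Ioo (0:ℝ) (min 1 a⁻¹) ∈ 𝓝[>] (0:ℝ) :=
      Ioo_mem_nhdsGT_of_mem ⟨le_refl 0, lt_min one_pos (by positivity)⟩
    filter_upwards [hmem] with x hx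
    obtain ⟨hx0, hx1⟩ := hx
    have hxa : a * x ≤ 1 := by
      have : x < a⁻¹ := lt_of_lt_of_le hx1 (min_le_right _ _)
      calc a * x ≤ a * a⁻¹ := by nlinarith
        _ = 1 := mul_inv_cancel₀ (ne_of_gt ha)
    constructor
    · constructor
      · exact ⟨le_of_lt hx0, le_of_lt (lt_of_lt_of_le hx1 (min_le_left _ _))⟩
      · exact ⟨by positivity, hxa⟩
    · intro h
      simp only [mem_insert_iff, mem_singleton_iff, Prod.mk.injEq] at h
      rcases h with ⟨h, _⟩ | ⟨h, _⟩
      · exact absurd h (ne_of_gt hx0)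
      · exact absurd h (ne_of_lt (lt_of_lt_of_le hx1 (min_le_left _ _)))

/-- Along the ray y = ax (a > 0), F(x,ax) → (a/(1+a), 1/(1+a)) as x → 0⁺; this limit
lies on the line ξ + η = 1 and on the ray η = ξ/a, and it depends on the slope a, so
F has no continuous extension to the origin. -/
theorem F_ray_limits :
    (∀ a : ℝ, 0 < a →
      Tendsto (fun x : ℝ => F (x, a * x)) (𝓝[>] (0:ℝ))
        (𝓝 ((a / (1 + a), 1 / (1 + a)) : ℝ × ℝ))) ∧
    (∀ a : ℝ, 0 < a → a / (1 + a) + 1 / (1 + a) = 1) ∧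
    (∀ a : ℝ, 0 < a → 1 / (1 + a) = (a / (1 + a)) / a) ∧
    (∀ a b : ℝ, 0 < a → 0 < b → a ≠ b →
      ((a / (1 + a), 1 / (1 + a)) : ℝ × ℝ) ≠ (b / (1 + b), 1 / (1 + b))) ∧
    ¬ ∃ L : ℝ × ℝ, Tendsto F (𝓝[X] ((0:ℝ), (0:ℝ))) (𝓝 L) := by
  have hinj : ∀ a b : ℝ, 0 < a → 0 < b → a ≠ b →
      ((a / (1 + a), 1 / (1 + a)) : ℝ × ℝ) ≠ (b / (1 + b), 1 / (1 + b)) := by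
    intro a b ha hb hab h
    have h1 : a / (1 + a) = b / (1 + b) := congrArg Prod.fst h
    have ha' : (1:ℝ) + a ≠ 0 := by nlinarith
    have hb' : (1:ℝ) + b ≠ 0 := by nlinarith
    field_simp at h1
    apply hab
    nlinarith
  refine ⟨ray_tendsto, ?_, ?_, hinj, ?_⟩
  · intro a ha
    have : (1:ℝ) + a ≠ 0 := by nlinarith
    field_simp
    ring
  · intro a ha
    have h1 : (1:ℝ) + a ≠ 0 := by nlinarith
    field_simp
  · rintro ⟨L, hL⟩
    have key : ∀ a : ℝ, 0 < a → L = ((a / (1 + a), 1 / (1 + a)) : ℝ × ℝ) := by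
      intro a ha
      exact tendsto_nhds_unique (hL.comp (ray_to_X a ha)) (ray_tendsto a ha)
    have h1 := key 1 one_pos
    have h2 := key 2 two_pos
    exact hinj 1 2 one_pos two_pos (by norm_num) (h1 ▸ h2)
end

section
/- Define G(ξ,η) := ((1−ξ−η)/(1−η), (1−ξ−η)/(1−ξ)). Then G inverts the minimal RS flip-flop map: (i) for every (x,y) ∈ X with x > 0 and y > 0, G(F(x,y)) = (x,y); (ii) for every (ξ,η) with ξ ≥ 0, η ≥ 0, ξ+η < 1 and (ξ,η) ≠ (0,0), the point G(ξ,η) lies in X and F(G(ξ,η)) = (ξ,η). -/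
open Set

/-- The inverse map G(ξ,η) = ((1−ξ−η)/(1−η), (1−ξ−η)/(1−ξ)). -/
noncomputable def G (q : ℝ × ℝ) : ℝ × ℝ :=
  ((1 - q.1 - q.2) / (1 - q.2), (1 - q.1 - q.2) / (1 - q.1))

/-- G inverts the minimal RS flip-flop map: (i) G(F(x,y)) = (x,y) for (x,y) ∈ X with
x > 0, y > 0; (ii) for ξ,η ≥ 0 with ξ+η < 1 and (ξ,η) ≠ (0,0), G(ξ,η) ∈ X and
F(G(ξ,η)) = (ξ,η). -/
theorem G_inverts_F :
    (∀ p ∈ X, 0 < p.1 → 0 < p.2 → G (F p) = p) ∧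
    (∀ q : ℝ × ℝ, 0 ≤ q.1 → 0 ≤ q.2 → q.1 + q.2 < 1 → q ≠ ((0:ℝ), (0:ℝ)) →
      G q ∈ X ∧ F (G q) = q) := by
  constructor
  · rintro ⟨x, y⟩ ⟨⟨⟨hx0, hx1⟩, hy0, hy1⟩, -⟩ hx hy
    simp only [F, G]
    have hD : 0 < x + y - x * y := by nlinarith
    have h1 : 1 - x * (1 - y) / (x + y - x * y) = y / (x + y - x * y) := by
      field_simp; ring
    have h2 : 1 - y * (1 - x) / (x + y - x * y) = x / (x + y - x * y) := by
      have : x + y - y * x ≠ 0 := by nlinarith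
      field_simp; ring
    have key : 1 - y * (1 - x) / (x + y - x * y) - x * (1 - y) / (x + y - x * y)
        = x * y / (x + y - x * y) := by
      have : x + y - y * x ≠ 0 := by nlinarith
      field_simp; ring
    rw [key, h1, h2]
    simp only [Prod.mk.injEq] at *
    constructor
    · rw [div_div_div_cancel_right₀, mul_div_assoc, div_self hy.ne', mul_one]
      exact hD.ne'
    · rw [div_div_div_cancel_right₀, mul_comm, mul_div_assoc, div_self hx.ne', mul_one]
      exact hD.ne'
  · rintro ⟨a, b⟩ ha hb hab hne
    have hne' : ¬ (a = 0 ∧ b = 0) := by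
      intro ⟨h1, h2⟩; exact hne (by simp [h1, h2])
    have hs : 0 < 1 - a - b := by linarith
    have ha1 : 0 < 1 - a := by linarith
    have hb1 : 0 < 1 - b := by linarith
    have hGq : G (a, b) = ((1 - a - b) / (1 - b), (1 - a - b) / (1 - a)) := rfl
    set x := (1 - a - b) / (1 - b) with hxd
    set y := (1 - a - b) / (1 - a) with hyd
    have hx0 : 0 < x := div_pos hs hb1
    have hy0 : 0 < y := div_pos hs ha1
    have hx1 : x ≤ 1 := by
      rw [hxd, div_le_one hb1]; linarith
    have hy1 : y ≤ 1 := by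
      rw [hyd, div_le_one ha1]; linarith
    have hD : 0 < x + y - x * y := by nlinarith
    constructor
    · refine ⟨⟨⟨hx0.le, hx1⟩, hy0.le, hy1⟩, ?_⟩
      simp only [mem_insert_iff, mem_singleton_iff, hGq, Prod.mk.injEq, not_or]
      constructor
      · intro ⟨h1, _⟩
        exact hx0.ne' h1
      · intro ⟨h1, h2⟩
        rw [div_eq_one_iff_eq hb1.ne'] at h1
        rw [div_eq_one_iff_eq ha1.ne'] at h2
        exact hne' ⟨by linarith, by linarith⟩
    · show (y * (1 - x) / (x + y - x * y), x * (1 - y) / (x + y - x * y)) = (a, b)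
      have e1 : y * (1 - x) = a * (x + y - x * y) := by
        rw [hxd, hyd]; field_simp; ring
      have e2 : x * (1 - y) = b * (x + y - x * y) := by
        rw [hxd, hyd]; field_simp; ring
      rw [e1, e2, mul_div_assoc, mul_div_assoc, div_self hD.ne', mul_one, mul_one]
end

section
/- The minimal RS flip-flop map F has exactly one fixed point in X: for (x,y) ∈ X one has F(x,y) = (x,y) if and only if x = y = (3−√5)/2. -/
open Set

/-- F has exactly one fixed point in X, namely p* = ((3−√5)/2, (3−√5)/2). -/
theorem F_unique_fixed_point :
    ∀ p ∈ X, F p = p ↔ p = (((3 - Real.sqrt 5) / 2 : ℝ), ((3 - Real.sqrt 5) / 2 : ℝ)) := by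
  have hs2 : Real.sqrt 5 ^ 2 = 5 := Real.sq_sqrt (by norm_num)
  have hs1 : (1:ℝ) < Real.sqrt 5 := by
    nlinarith [Real.sqrt_nonneg 5, hs2]
  rintro ⟨x, y⟩ ⟨⟨hx, hy⟩, hne⟩
  simp only [mem_Icc] at hx hy
  have hne' : ¬(x = 0 ∧ y = 0) := by
    intro ⟨h1, h2⟩
    exact hne (by simp [h1, h2])
  have hD : 0 < x + y - x * y := by
    rcases eq_or_lt_of_le hx.1 with h | h
    · rcases eq_or_lt_of_le hy.1 with h' | h'
      · exact absurd ⟨h.symm, h'.symm⟩ hne'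
      · nlinarith
    · rcases eq_or_lt_of_le hy.1 with h' | h'
      · nlinarith
      · nlinarith
  constructor
  · intro hF
    rw [Prod.ext_iff] at hF
    simp only [F] at hF
    obtain ⟨h1, h2⟩ := hF
    rw [div_eq_iff hD.ne'] at h1 h2
    have hxy : x = y := by
      have key : (y - x) * (1 + (x + y - x * y)) = 0 := by ring_nf; nlinarith [h1, h2]
      have : (0:ℝ) < 1 + (x + y - x * y) := by linarith
      have := mul_eq_zero.mp key
      rcases this with h | h
      · linarith
      · linarith
    subst hxy
    have hx0 : x ≠ 0 := fun h => hne' ⟨h, h⟩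
    have hquad : x ^ 2 - 3 * x + 1 = 0 := by
      have : x * (x ^ 2 - 3 * x + 1) = 0 := by nlinarith [h1]
      rcases mul_eq_zero.mp this with h | h
      · exact absurd h hx0
      · exact h
    have hs : Real.sqrt 5 = 3 - 2 * x := by
      rw [show (5:ℝ) = (3 - 2 * x) ^ 2 by nlinarith]
      exact Real.sqrt_sq (by nlinarith [hx.2])
    rw [Prod.ext_iff]
    constructor <;> (simp only; linarith [hs])
  · intro hp
    rw [Prod.ext_iff] at hp
    obtain ⟨h1, h2⟩ := hp
    simp only at h1 h2
    subst h1; subst h2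
    set a : ℝ := (3 - Real.sqrt 5) / 2 with ha
    have hDval : a + a - a * a = (Real.sqrt 5 - 1) / 2 := by
      rw [ha]; nlinarith [hs2]
    have hDpos : (0:ℝ) < a + a - a * a := by rw [hDval]; linarith
    simp only [F, Prod.ext_iff]
    constructor <;>
    · rw [div_eq_iff hDpos.ne']
      rw [ha]; nlinarith [hs2]
end

section
/- The fixed point p* := ((3−√5)/2, (3−√5)/2) of the minimal RS flip-flop map F is a saddle point: the Jacobian matrix of F at p* has the eigenvalue λ_s = −(3−√5)/2 with eigenvector (1,1) and the eigenvalue λ_u = −(1+√5)/2 with eigenvector (1,−1), and |λ_s| < 1 < |λ_u|. -/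
open Set

/-- The linear map ℝ² → ℝ given by (u,v) ↦ a·u + b·v (a row of a Jacobian matrix). -/
noncomputable def row (a b : ℝ) : ℝ × ℝ →L[ℝ] ℝ :=
  a • ContinuousLinearMap.fst ℝ ℝ ℝ + b • ContinuousLinearMap.snd ℝ ℝ ℝ

/-- The Jacobian of F at (x,y), as a continuous linear map:
(x+y−xy)⁻² · [[−y, x(1−x)], [y(1−y), −x]]. -/
noncomputable def DF (x y : ℝ) : ℝ × ℝ →L[ℝ] ℝ × ℝ :=
  ((x + y - x * y) ^ 2)⁻¹ •
    ((row (-y) (x * (1 - x))).prod (row (y * (1 - y)) (-x)))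

/-- The diagonal coordinate of the fixed point p*. -/
noncomputable def xstar : ℝ := (3 - Real.sqrt 5) / 2

/-- The fixed point p* = ((3−√5)/2, (3−√5)/2). -/
noncomputable def pstar : ℝ × ℝ := (xstar, xstar)

lemma sqrt5_sq : Real.sqrt 5 ^ 2 = 5 := Real.sq_sqrt (by norm_num)

lemma sqrt5_gt : 2 < Real.sqrt 5 := by
  nlinarith [Real.sqrt_nonneg 5, sqrt5_sq]

lemma sqrt5_lt : Real.sqrt 5 < 3 := by
  nlinarith [Real.sqrt_nonneg 5, sqrt5_sq]

lemma den_pos : 0 < xstar + xstar - xstar * xstar := by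
  have h2 := sqrt5_gt
  have h3 := sqrt5_lt
  have hs := sqrt5_sq
  unfold xstar
  nlinarith

lemma den_ne : xstar + xstar - xstar * xstar ≠ 0 := ne_of_gt den_pos

/-- p* is a saddle point of F: the Jacobian of F at p* has eigenvalue
λ_s = −(3−√5)/2 with eigenvector (1,1) and eigenvalue λ_u = −(1+√5)/2 with
eigenvector (1,−1), and |λ_s| < 1 < |λ_u|. -/
theorem F_saddle_at_pstar :
    HasFDerivAt F (DF xstar xstar) pstar ∧
    DF xstar xstar ((1:ℝ), (1:ℝ)) = (-((3 - Real.sqrt 5) / 2)) • ((1:ℝ), (1:ℝ)) ∧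
    DF xstar xstar ((1:ℝ), (-1:ℝ)) = (-((1 + Real.sqrt 5) / 2)) • ((1:ℝ), (-1:ℝ)) ∧
    |(-((3 - Real.sqrt 5) / 2) : ℝ)| < 1 ∧ 1 < |(-((1 + Real.sqrt 5) / 2) : ℝ)| := by
  have hs := sqrt5_sq
  have h2 := sqrt5_gt
  have h3 := sqrt5_lt
  have hd := den_ne
  refine ⟨?_, ?_, ?_, ?_, ?_⟩
  · -- derivative
    have hFeq : F = fun p : ℝ × ℝ =>
        (p.2 * (1 - p.1) * ((fun q : ℝ × ℝ => q.1 + q.2 - q.1 * q.2) p)⁻¹,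
         p.1 * (1 - p.2) * ((fun q : ℝ × ℝ => q.1 + q.2 - q.1 * q.2) p)⁻¹) := by
      funext p
      simp [F, div_eq_mul_inv]
    rw [hFeq]
    have hfst : HasFDerivAt (fun p : ℝ × ℝ => p.1)
        (ContinuousLinearMap.fst ℝ ℝ ℝ) pstar := hasFDerivAt_fst
    have hsnd : HasFDerivAt (fun p : ℝ × ℝ => p.2)
        (ContinuousLinearMap.snd ℝ ℝ ℝ) pstar := hasFDerivAt_snd
    have hone : HasFDerivAt (fun _ : ℝ × ℝ => (1:ℝ))
        (0 : ℝ × ℝ →L[ℝ] ℝ) pstar := hasFDerivAt_const 1 pstar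
    have hN1 := hsnd.mul (hone.sub hfst)
    have hN2 := hfst.mul (hone.sub hsnd)
    have hD := (hfst.add hsnd).sub (hfst.mul hsnd)
    have hdp : ((fun q : ℝ × ℝ => q.1 + q.2 - q.1 * q.2) pstar) ≠ 0 := hd
    have hinv0 := hasDerivAt_inv hdp
    have hinv := hinv0.comp_hasFDerivAt pstar hD
    have h1 := hN1.mul hinv
    have h2' := hN2.mul hinv
    have hF := HasFDerivAt.prodMk h1 h2'
    refine hF.congr_fderiv ?_
    apply ContinuousLinearMap.ext
    intro p
    simp only [pstar, DF, row, Function.comp_apply, Function.comp,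
      ContinuousLinearMap.prod_apply, ContinuousLinearMap.smul_apply,
      ContinuousLinearMap.sub_apply, ContinuousLinearMap.add_apply,
      ContinuousLinearMap.zero_apply, ContinuousLinearMap.coe_fst',
      ContinuousLinearMap.coe_snd', smul_eq_mul, Prod.smul_mk, Prod.mk.injEq,
      Prod.fst, Prod.snd, Pi.mul_apply, Pi.sub_apply, Pi.add_apply]
    have hd' : xstar + xstar - xstar * xstar ≠ 0 := hd
    constructor <;> (field_simp; try ring)
  · -- eigenvector (1,1)
    have hdsq : (xstar + xstar - xstar * xstar) ^ 2 = xstar := by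
      unfold xstar
      linear_combination ((Real.sqrt 5 ^ 2 - 4 * Real.sqrt 5 + 3) / 16) * sqrt5_sq
    have hx0 : xstar ≠ 0 := by unfold xstar; nlinarith
    have hcalc : DF xstar xstar ((1:ℝ), (1:ℝ)) =
        (xstar⁻¹ * (-xstar + xstar * (1 - xstar)),
         xstar⁻¹ * (xstar * (1 - xstar) + -xstar)) := by
      simp only [DF, row, hdsq, ContinuousLinearMap.smul_apply,
        ContinuousLinearMap.prod_apply, ContinuousLinearMap.add_apply,
        ContinuousLinearMap.smul_apply, ContinuousLinearMap.coe_fst',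
        ContinuousLinearMap.coe_snd', smul_eq_mul, Prod.smul_mk, Prod.mk.injEq]
      constructor <;> ring
    rw [hcalc]
    have hxv : xstar = (3 - Real.sqrt 5) / 2 := rfl
    refine Prod.ext ?_ ?_ <;>
    · simp only [Prod.smul_mk, smul_eq_mul, Prod.fst, Prod.snd]
      rw [inv_mul_eq_div, div_eq_iff hx0, hxv]
      ring
  · -- eigenvector (1,-1)
    have hdsq : (xstar + xstar - xstar * xstar) ^ 2 = xstar := by
      unfold xstar
      linear_combination ((Real.sqrt 5 ^ 2 - 4 * Real.sqrt 5 + 3) / 16) * sqrt5_sq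
    have hx0 : xstar ≠ 0 := by unfold xstar; nlinarith
    have hcalc : DF xstar xstar ((1:ℝ), (-1:ℝ)) =
        (xstar⁻¹ * (-xstar - xstar * (1 - xstar)),
         xstar⁻¹ * (xstar * (1 - xstar) + xstar)) := by
      simp only [DF, row, hdsq, ContinuousLinearMap.smul_apply,
        ContinuousLinearMap.prod_apply, ContinuousLinearMap.add_apply,
        ContinuousLinearMap.coe_fst', ContinuousLinearMap.coe_snd',
        smul_eq_mul, Prod.smul_mk, Prod.mk.injEq]
      constructor <;> ring
    rw [hcalc]
    have hxv : xstar = (3 - Real.sqrt 5) / 2 := rfl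
    refine Prod.ext ?_ ?_ <;>
    · simp only [Prod.smul_mk, smul_eq_mul, Prod.fst, Prod.snd]
      rw [inv_mul_eq_div, div_eq_iff hx0, hxv]
      ring
  · rw [abs_lt]
    constructor <;> nlinarith
  · rw [abs_of_nonpos (by nlinarith)]
    nlinarith
end

section
/- The 2-cycle ζ := {(1,0),(0,1)} of the minimal RS flip-flop map attracts every orbit off the diagonal: for every (x,y) ∈ X with x ≠ y, the distance from Fⁿ(x,y) to the set ζ tends to 0 as n → ∞, and the even iterates F^{2n}(x,y) converge to one of the two points (1,0) or (0,1). -/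
open Set Filter Topology

/-- The Euclidean norm on ℝ². -/
noncomputable def enorm (p : ℝ × ℝ) : ℝ := Real.sqrt (p.1 ^ 2 + p.2 ^ 2)

/-- Explicit formula for F∘F on the open square. -/
lemma G_eq (x y : ℝ) (hx0 : 0 < x) (hx1 : x < 1) (hy0 : 0 < y) (hy1 : y < 1) :
    F (F (x, y)) =
      (x^2*(1-y) / (y*(1-x)*(x+y-x*y) + x^2*(1-y)),
       y^2*(1-x) / (y*(1-x)*(x+y-x*y) + x^2*(1-y))) := by
  have hd : 0 < x + y - x*y := by nlinarith
  have hD : 0 < y*(1-x)*(x+y-x*y) + x^2*(1-y) := by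
    have h1 : 0 < y*(1-x)*(x+y-x*y) := by
      apply mul_pos (mul_pos hy0 (by linarith)) hd
    have h2 : 0 < x^2*(1-y) := by
      apply mul_pos (by positivity) (by linarith)
    linarith
  have hF : F (x, y) = (y*(1-x)/(x+y-x*y), x*(1-y)/(x+y-x*y)) := rfl
  rw [hF]
  have hd2 : (y*(1-x)/(x+y-x*y)) + (x*(1-y)/(x+y-x*y))
      - (y*(1-x)/(x+y-x*y)) * (x*(1-y)/(x+y-x*y))
      = (y*(1-x)*(x+y-x*y) + x^2*(1-y)) / (x+y-x*y)^2 := by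
    field_simp
    ring
  show ((x*(1-y)/(x+y-x*y)) * (1 - (y*(1-x)/(x+y-x*y))) / _,
        (y*(1-x)/(x+y-x*y)) * (1 - (x*(1-y)/(x+y-x*y))) / _) = _
  rw [hd2]
  have hdne : x + y - x*y ≠ 0 := ne_of_gt hd
  have hDne : y*(1-x)*(x+y-x*y) + x^2*(1-y) ≠ 0 := ne_of_gt hD
  apply Prod.ext
  · simp only; field_simp; ring
  · simp only
    rw [div_eq_div_iff (div_ne_zero hDne (pow_ne_zero 2 hdne)) hDne, one_sub_div hdne, div_mul_div_comm,
      div_mul_eq_mul_div, mul_div_assoc', div_eq_div_iff (mul_ne_zero hdne hdne) (pow_ne_zero 2 hdne)]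
    ring

noncomputable def rr (p : ℝ × ℝ) : ℝ := p.1 * (1 - p.2) / (p.2 * (1 - p.1))

def Pord (p : ℝ × ℝ) : Prop := 0 < p.2 ∧ p.2 < p.1 ∧ p.1 < 1

lemma rr_gt_one {p : ℝ × ℝ} (h : Pord p) : 1 < rr p := by
  obtain ⟨x, y⟩ := p
  obtain ⟨hy0, hyx, hx1⟩ := h
  simp only [rr]
  rw [lt_div_iff₀ (by nlinarith)]
  nlinarith

lemma step {p : ℝ × ℝ} (h : Pord p) :
    Pord (F (F p)) ∧ rr p ^ 2 ≤ rr (F (F p)) ∧ (F (F p)).2 ≤ 1 / rr p ∧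
      1 - (F (F p)).1 ≤ 1 / rr p := by
  have hr1 : 1 < rr p := rr_gt_one h
  obtain ⟨x, y⟩ := p
  obtain ⟨hy0, hyx, hx1⟩ := h
  simp only at hy0 hyx hx1
  have hx0 : 0 < x := lt_trans hy0 hyx
  have hy1 : y < 1 := lt_trans hyx hx1
  have hd : 0 < x + y - x*y := by nlinarith
  have hD : 0 < y*(1-x)*(x+y-x*y) + x^2*(1-y) := by
    have h1 : 0 < y*(1-x)*(x+y-x*y) := mul_pos (mul_pos hy0 (by linarith)) hd
    have h2 : 0 < x^2*(1-y) := mul_pos (by positivity) (by linarith)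
    linarith
  have hG := G_eq x y hx0 hx1 hy0 hy1
  rw [hG]
  have hr : (0:ℝ) < rr (x, y) := lt_trans one_pos hr1
  have hrr : rr (x, y) = x * (1-y) / (y * (1-x)) := rfl
  have hyd : 0 < y * (1-x) := mul_pos hy0 (by linarith)
  have hX : 0 < x^2*(1-y) := mul_pos (by positivity) (by linarith)
  have hY : 0 < y^2*(1-x) := mul_pos (by positivity) (by linarith)
  have hXY : y^2*(1-x) < x^2*(1-y) := by nlinarith
  have hDX : 0 < y*(1-x)*(x+y-x*y) + x^2*(1-y) - x^2*(1-y) := by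
    have := mul_pos (mul_pos hy0 (show (0:ℝ) < 1-x by linarith)) hd
    linarith
  have hDY : 0 < y*(1-x)*(x+y-x*y) + x^2*(1-y) - y^2*(1-x) := by nlinarith
  have hDne : (y*(1-x)*(x+y-x*y) + x^2*(1-y)) ≠ 0 := ne_of_gt hD
  have hYne : (y^2*(1-x)) ≠ 0 := ne_of_gt hY
  have hydne : y*(1-x) ≠ 0 := ne_of_gt hyd
  refine ⟨⟨by positivity, ?_, ?_⟩, ?_, ?_, ?_⟩
  · simp only
    rw [div_lt_div_iff₀ hD hD]
    nlinarith
  · simp only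
    exact (div_lt_one hD).2 (by nlinarith)
  · -- rr p ^ 2 ≤ rr (G p)
    have hq : rr (x^2*(1-y) / (y*(1-x)*(x+y-x*y) + x^2*(1-y)),
                  y^2*(1-x) / (y*(1-x)*(x+y-x*y) + x^2*(1-y)))
        = (x^2*(1-y)) * ((y*(1-x)*(x+y-x*y) + x^2*(1-y)) - y^2*(1-x))
          / ((y^2*(1-x)) * ((y*(1-x)*(x+y-x*y) + x^2*(1-y)) - x^2*(1-y))) := by
      simp only [rr]
      field_simp
    rw [hq, hrr, div_pow, div_le_div_iff₀ (pow_pos hyd 2) (mul_pos hY hDX)]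
    have hfact : (x^2*(1-y)) * ((y*(1-x)*(x+y-x*y) + x^2*(1-y)) - y^2*(1-x))
          * (y * (1-x))^2
        - (x*(1-y))^2 * ((y^2*(1-x)) * ((y*(1-x)*(x+y-x*y) + x^2*(1-y)) - x^2*(1-y)))
        = x^2*y^2*(1-y)^2*(1-x)^2*(x-y)*(x+y-x*y) := by ring
    nlinarith [mul_pos (mul_pos (mul_pos (mul_pos (mul_pos (show (0:ℝ) < x^2 by positivity)
      (show (0:ℝ) < y^2 by positivity)) (pow_pos (show (0:ℝ) < 1-y by linarith) 2))
      (pow_pos (show (0:ℝ) < 1-x by linarith) 2)) (show (0:ℝ) < x - y by linarith)) hd]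
  · -- y-coordinate bound
    simp only
    rw [div_le_div_iff₀ hD hr, hrr]
    have : y^2*(1-x) * (x * (1-y) / (y*(1-x))) = x*y*(1-y) := by
      have h1x : (1:ℝ) - x ≠ 0 := ne_of_gt (by linarith)
      field_simp
    rw [this]
    nlinarith
  · -- x-coordinate bound
    simp only
    have h1 : 1 - x^2*(1-y) / (y*(1-x)*(x+y-x*y) + x^2*(1-y))
        = (y*(1-x)*(x+y-x*y)) / (y*(1-x)*(x+y-x*y) + x^2*(1-y)) := by
      field_simp
      ring
    rw [h1, div_le_div_iff₀ hD hr, hrr]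
    have : y*(1-x)*(x+y-x*y) * (x * (1-y) / (y*(1-x))) = x*(1-y)*(x+y-x*y) := by
      have h1x : (1:ℝ) - x ≠ 0 := ne_of_gt (by linarith)
      field_simp
    rw [this]
    nlinarith

lemma iter_facts {p : ℝ × ℝ} (h : Pord p) (n : ℕ) :
    Pord (F^[2*n] p) ∧ rr p ^ (2^n) ≤ rr (F^[2*n] p) := by
  induction n with
  | zero => refine ⟨by simpa using h, by simp⟩
  | succ n ih =>
    obtain ⟨hP, hle⟩ := ih
    have hstep := step hP
    have h2 : F^[2*(n+1)] p = F (F (F^[2*n] p)) := by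
      have : 2*(n+1) = 2 + 2*n := by ring
      rw [this, Function.iterate_add_apply]
      rfl
    rw [h2]
    refine ⟨hstep.1, ?_⟩
    have h1 : (0:ℝ) ≤ rr p := le_of_lt (lt_trans one_pos (rr_gt_one h))
    calc rr p ^ 2^(n+1) = (rr p ^ 2^n)^2 := by rw [← pow_mul, pow_succ]
    _ ≤ (rr (F^[2*n] p))^2 := by
        apply pow_le_pow_left₀ (by positivity) hle
    _ ≤ rr (F (F (F^[2*n] p))) := hstep.2.1

lemma even_bounds {p : ℝ × ℝ} (h : Pord p) (n : ℕ) :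
    (F^[2*(n+1)] p).2 ≤ 1 / rr p ^ (2^n) ∧
      1 - (F^[2*(n+1)] p).1 ≤ 1 / rr p ^ (2^n) := by
  obtain ⟨hP, hle⟩ := iter_facts h n
  have hstep := step hP
  have h2 : F^[2*(n+1)] p = F (F (F^[2*n] p)) := by
    have : 2*(n+1) = 2 + 2*n := by ring
    rw [this, Function.iterate_add_apply]
    rfl
  rw [h2]
  have hr0 : (0:ℝ) < rr p := lt_trans one_pos (rr_gt_one h)
  have hrn : (0:ℝ) < rr (F^[2*n] p) := lt_trans one_pos (rr_gt_one hP)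
  have key : 1 / rr (F^[2*n] p) ≤ 1 / rr p ^ (2^n) :=
    one_div_le_one_div_of_le (by positivity) hle
  exact ⟨le_trans hstep.2.2.1 key, le_trans hstep.2.2.2 key⟩

lemma pow_pow_tendsto {c : ℝ} (hc : 1 < c) :
    Tendsto (fun n : ℕ => 1 / c ^ (2^n)) atTop (𝓝 0) := by
  have h1 : Tendsto (fun m : ℕ => c ^ m) atTop atTop :=
    tendsto_pow_atTop_atTop_of_one_lt hc
  have h2 : Tendsto (fun n : ℕ => 2^n) atTop atTop :=
    tendsto_pow_atTop_atTop_of_one_lt one_lt_two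
  simpa [one_div, Function.comp_def, Pi.inv_def] using (h1.comp h2).inv_tendsto_atTop

/-- Even iterates converge to (1,0) in the ordered interior case. -/
lemma even_tendsto {p : ℝ × ℝ} (h : Pord p) :
    Tendsto (fun n : ℕ => F^[2*n] p) atTop (𝓝 ((1:ℝ), (0:ℝ))) := by
  have hr1 : 1 < rr p := rr_gt_one h
  have hten := pow_pow_tendsto hr1
  have hx : Tendsto (fun n : ℕ => (F^[2*n] p).1) atTop (𝓝 1) := by
    rw [← tendsto_add_atTop_iff_nat 1]
    apply tendsto_of_tendsto_of_tendsto_of_le_of_le (g := fun n : ℕ => 1 - 1/rr p^(2^n))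
      (h := fun _ : ℕ => (1:ℝ))
    · simpa using (tendsto_const_nhds (x := (1:ℝ))).sub hten
    · exact tendsto_const_nhds
    · intro n
      have := (even_bounds h n).2
      simp only
      linarith
    · intro n
      exact le_of_lt (iter_facts h (n+1)).1.2.2
  have hy : Tendsto (fun n : ℕ => (F^[2*n] p).2) atTop (𝓝 0) := by
    rw [← tendsto_add_atTop_iff_nat 1]
    apply tendsto_of_tendsto_of_tendsto_of_le_of_le (g := fun _ : ℕ => (0:ℝ))
      (h := fun n : ℕ => 1/rr p^(2^n))
    · exact tendsto_const_nhds
    · exact hten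
    · intro n
      exact le_of_lt (iter_facts h (n+1)).1.1
    · intro n
      exact (even_bounds h n).1
  have : (fun n : ℕ => F^[2*n] p) = fun n => ((F^[2*n] p).1, (F^[2*n] p).2) := by
    funext n; rfl
  rw [this]
  exact hx.prodMk_nhds hy


lemma contF_at (a : ℝ × ℝ) (ha : a.1 + a.2 - a.1 * a.2 ≠ 0) : ContinuousAt F a := by
  apply ContinuousAt.prodMk
  · exact ((continuous_snd.mul (continuous_const.sub continuous_fst)).continuousAt).div
      (((continuous_fst.add continuous_snd).sub
        (continuous_fst.mul continuous_snd)).continuousAt) ha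
  · exact ((continuous_fst.mul (continuous_const.sub continuous_snd)).continuousAt).div
      (((continuous_fst.add continuous_snd).sub
        (continuous_fst.mul continuous_snd)).continuousAt) ha

lemma cont_enorm : Continuous _root_.enorm := by
  unfold _root_.enorm
  exact (continuous_fst.pow 2 |>.add (continuous_snd.pow 2)).sqrt

lemma enorm_zero' : _root_.enorm (0, 0) = 0 := by simp [_root_.enorm]

/-- combine even/odd information on a min of two nonnegative sequences. -/
lemma tendsto_min_even_odd {u v : ℕ → ℝ} (hu0 : ∀ n, 0 ≤ u n) (hv0 : ∀ n, 0 ≤ v n)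
    (he : Tendsto (fun m : ℕ => u (2*m)) atTop (𝓝 0))
    (ho : Tendsto (fun m : ℕ => v (2*m+1)) atTop (𝓝 0)) :
    Tendsto (fun n : ℕ => min (u n) (v n)) atTop (𝓝 0) := by
  rw [Metric.tendsto_atTop] at he ho ⊢
  intro ε hε
  obtain ⟨N1, hN1⟩ := he ε hε
  obtain ⟨N2, hN2⟩ := ho ε hε
  refine ⟨2 * max N1 N2 + 2, fun n hn => ?_⟩
  have hmin0 : 0 ≤ min (u n) (v n) := le_min (hu0 n) (hv0 n)
  rcases Nat.even_or_odd n with ⟨m, hm⟩ | ⟨m, hm⟩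
  · have hmN : N1 ≤ m := by omega
    have := hN1 m hmN
    have hum : u n = u (2*m) := by rw [hm]; ring_nf
    rw [Real.dist_eq, sub_zero, abs_of_nonneg hmin0]
    rw [Real.dist_eq, sub_zero, abs_of_nonneg (hu0 (2*m))] at this
    exact lt_of_le_of_lt (by rw [hum]; exact min_le_left _ _) this
  · have hmN : N2 ≤ m := by omega
    have := hN2 m hmN
    have hvm : v n = v (2*m+1) := by rw [hm]
    rw [Real.dist_eq, sub_zero, abs_of_nonneg hmin0]
    rw [Real.dist_eq, sub_zero, abs_of_nonneg (hv0 (2*m+1))] at this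
    exact lt_of_le_of_lt (by rw [hvm]; exact min_le_right _ _) this

lemma F_swap (p : ℝ × ℝ) : F p.swap = (F p).swap := by
  obtain ⟨x, y⟩ := p
  simp only [F, Prod.swap]
  have h : y + x - y * x = x + y - x * y := by ring
  rw [h]

lemma F_iter_swap (p : ℝ × ℝ) (n : ℕ) : F^[n] p.swap = (F^[n] p).swap := by
  induction n with
  | zero => rfl
  | succ n ih => rw [Function.iterate_succ_apply', Function.iterate_succ_apply', ih, F_swap]

lemma tendsto_enorm_sub {f : ℕ → ℝ × ℝ} {a : ℝ × ℝ} (hf : Tendsto f atTop (𝓝 a)) :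
    Tendsto (fun n => _root_.enorm (f n - a)) atTop (𝓝 0) := by
  have h1 : Tendsto (fun n => f n - a) atTop (𝓝 (a - a)) := hf.sub tendsto_const_nhds
  rw [sub_self] at h1
  have h2 := (cont_enorm.continuousAt (x := (0:ℝ×ℝ))).tendsto.comp h1
  have h3 : _root_.enorm 0 = 0 := by simp [_root_.enorm]
  rw [h3] at h2
  exact h2

lemma F_one_zero : F (1, 0) = ((0:ℝ), (1:ℝ)) := by norm_num [F]

lemma F_zero_one : F (0, 1) = ((1:ℝ), (0:ℝ)) := by norm_num [F]

/-- Full conclusion in the ordered interior case. -/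
lemma main_ord {p : ℝ × ℝ} (h : Pord p) :
    Tendsto (fun n : ℕ =>
        min (_root_.enorm (F^[n] p - ((1:ℝ), (0:ℝ)))) (_root_.enorm (F^[n] p - ((0:ℝ), (1:ℝ)))))
      atTop (𝓝 0) ∧
    Tendsto (fun n : ℕ => F^[2 * n] p) atTop (𝓝 ((1:ℝ), (0:ℝ))) := by
  have heven := even_tendsto h
  refine ⟨?_, heven⟩
  have hodd : Tendsto (fun m : ℕ => F^[2*m+1] p) atTop (𝓝 ((0:ℝ), (1:ℝ))) := by
    have hc : ContinuousAt F ((1:ℝ), (0:ℝ)) := contF_at _ (by norm_num)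
    have := (hc.tendsto.comp heven)
    rw [F_one_zero] at this
    apply this.congr
    intro m
    simp [Function.comp, Function.iterate_succ_apply']
  apply tendsto_min_even_odd (fun n => Real.sqrt_nonneg _) (fun n => Real.sqrt_nonneg _)
  · exact tendsto_enorm_sub heven
  · exact tendsto_enorm_sub hodd

lemma enorm_swap (z : ℝ × ℝ) : _root_.enorm z.swap = _root_.enorm z := by
  simp [_root_.enorm, add_comm]

/-- Full conclusion in the reverse-ordered interior case. -/
lemma main_ord' {p : ℝ × ℝ} (h : Pord p.swap) :
    Tendsto (fun n : ℕ =>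
        min (_root_.enorm (F^[n] p - ((1:ℝ), (0:ℝ)))) (_root_.enorm (F^[n] p - ((0:ℝ), (1:ℝ)))))
      atTop (𝓝 0) ∧
    Tendsto (fun n : ℕ => F^[2 * n] p) atTop (𝓝 ((0:ℝ), (1:ℝ))) := by
  obtain ⟨hmin, hev⟩ := main_ord h
  constructor
  · apply hmin.congr
    intro n
    rw [F_iter_swap]
    have e1 : ((F^[n] p).swap - ((1:ℝ), (0:ℝ))) = ((F^[n] p) - ((0:ℝ),(1:ℝ))).swap := rfl
    have e2 : ((F^[n] p).swap - ((0:ℝ), (1:ℝ))) = ((F^[n] p) - ((1:ℝ),(0:ℝ))).swap := rfl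
    rw [e1, e2, enorm_swap, enorm_swap, min_comm]
  · have hc : Continuous (Prod.swap : ℝ × ℝ → ℝ × ℝ) := continuous_swap
    have := (hc.continuousAt.tendsto.comp hev)
    apply this.congr
    intro n
    simp only [Function.comp_apply]
    rw [F_iter_swap, Prod.swap_swap]

/-- Conclusion when the orbit hits the 2-cycle after k steps. -/
lemma main_cycle {p : ℝ × ℝ} {k : ℕ}
    (hk : F^[k] p = ((1:ℝ), (0:ℝ)) ∨ F^[k] p = ((0:ℝ), (1:ℝ))) :
    Tendsto (fun n : ℕ =>
        min (_root_.enorm (F^[n] p - ((1:ℝ), (0:ℝ)))) (_root_.enorm (F^[n] p - ((0:ℝ), (1:ℝ)))))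
      atTop (𝓝 0) ∧
    ∃ q : ℝ × ℝ, (q = ((1:ℝ), (0:ℝ)) ∨ q = ((0:ℝ), (1:ℝ))) ∧
      Tendsto (fun n : ℕ => F^[2 * n] p) atTop (𝓝 q) := by
  have pair_iter : ∀ (j : ℕ) (z : ℝ × ℝ), (z = ((1:ℝ),(0:ℝ)) ∨ z = ((0:ℝ),(1:ℝ))) →
      (F^[j] z = ((1:ℝ),(0:ℝ)) ∨ F^[j] z = ((0:ℝ),(1:ℝ))) := by
    intro j
    induction j with
    | zero => intro z hz; simpa using hz
    | succ j ih =>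
      rintro z (rfl | rfl) <;> rw [Function.iterate_succ_apply]
      · exact ih _ (Or.inr F_one_zero)
      · exact ih _ (Or.inl F_zero_one)
  have per2 : ∀ (j : ℕ) (z : ℝ × ℝ), (z = ((1:ℝ),(0:ℝ)) ∨ z = ((0:ℝ),(1:ℝ))) →
      F^[2*j] z = z := by
    intro j
    induction j with
    | zero => intro z hz; simp
    | succ j ih =>
      rintro z hz
      have h2 : 2*(j+1) = 2*j + 2 := by ring
      rw [h2, Function.iterate_add_apply]
      have hFF : F^[2] z = z := by
        rcases hz with rfl | rfl
        · rw [show (2:ℕ) = 1+1 from rfl, Function.iterate_add_apply]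
          simp [F_one_zero, F_zero_one]
        · rw [show (2:ℕ) = 1+1 from rfl, Function.iterate_add_apply]
          simp [F_one_zero, F_zero_one]
      rw [hFF, ih z hz]
  have hq : F^[2*k] p = ((1:ℝ),(0:ℝ)) ∨ F^[2*k] p = ((0:ℝ),(1:ℝ)) := by
    have : 2*k = k + k := by ring
    rw [this, Function.iterate_add_apply]
    exact pair_iter k _ hk
  have hall : ∀ n, k ≤ n → (F^[n] p = ((1:ℝ),(0:ℝ)) ∨ F^[n] p = ((0:ℝ),(1:ℝ))) := by
    intro n hn
    have : n = (n - k) + k := by omega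
    rw [this, Function.iterate_add_apply]
    exact pair_iter _ _ hk
  constructor
  · apply Tendsto.congr' _ (tendsto_const_nhds (x := (0:ℝ)))
    filter_upwards [eventually_atTop.2 ⟨k, fun n hn => hall n hn⟩] with n hn
    rcases hn with h1 | h1 <;> rw [h1]
    · rw [sub_self]
      have : _root_.enorm 0 = 0 := by simp [_root_.enorm]
      rw [this, eq_comm]
      exact min_eq_left (Real.sqrt_nonneg _)
    · rw [sub_self]
      have : _root_.enorm 0 = 0 := by simp [_root_.enorm]
      rw [this, eq_comm]
      exact min_eq_right (Real.sqrt_nonneg _)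
  · refine ⟨F^[2*k] p, hq, ?_⟩
    apply Tendsto.congr' _ (tendsto_const_nhds (x := F^[2*k] p))
    filter_upwards [eventually_atTop.2 ⟨k, fun n hn => hn⟩] with n hn
    have h1 : 2*n = 2*(n-k) + 2*k := by omega
    rw [h1, Function.iterate_add_apply, per2 _ _ hq]

/-- The 2-cycle ζ = {(1,0),(0,1)} attracts every orbit off the diagonal:
the (Euclidean) distance from Fⁿ(x,y) to ζ tends to 0, and the even iterates
converge to one of the two points (1,0), (0,1). -/
theorem two_cycle_attracts :
    ∀ p ∈ X, p.1 ≠ p.2 →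
      Tendsto (fun n : ℕ =>
          min (_root_.enorm (F^[n] p - ((1:ℝ), (0:ℝ)))) (_root_.enorm (F^[n] p - ((0:ℝ), (1:ℝ)))))
        atTop (𝓝 0) ∧
      ∃ q : ℝ × ℝ, (q = ((1:ℝ), (0:ℝ)) ∨ q = ((0:ℝ), (1:ℝ))) ∧
        Tendsto (fun n : ℕ => F^[2 * n] p) atTop (𝓝 q) := by
  rintro ⟨x, y⟩ hp hne
  obtain ⟨⟨⟨hx0, hx1⟩, hy0, hy1⟩, hcor⟩ := hp
  simp only [mem_insert_iff, mem_singleton_iff, Prod.mk.injEq, not_or, not_and] at hcor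
  obtain ⟨hc00, hc11⟩ := hcor
  simp only [ne_eq] at hne
  simp only at hx0 hx1 hy0 hy1
  -- boundary cases
  rcases eq_or_lt_of_le hx0 with hx0' | hx0'
  · -- x = 0, so y > 0, F p = (1,0)
    have hy0' : y ≠ 0 := fun h => hc00 hx0'.symm h
    have h1 : F ((x:ℝ), y) = ((1:ℝ), (0:ℝ)) := by
      rw [← hx0']
      simp only [F]
      rw [Prod.mk.injEq]
      constructor
      · simp [hy0']
      · simp
    exact main_cycle (k := 1) (Or.inl (by simpa using h1))
  rcases eq_or_lt_of_le hy0 with hy0' | hy0'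
  · -- y = 0, x > 0
    have h1 : F ((x:ℝ), y) = ((0:ℝ), (1:ℝ)) := by
      rw [← hy0']
      simp only [F]
      rw [Prod.mk.injEq]
      constructor
      · simp
      · simp [hx0'.ne']
    exact main_cycle (k := 1) (Or.inr (by simpa using h1))
  rcases eq_or_lt_of_le hx1 with hx1' | hx1'
  · -- x = 1, y < 1 since not (1,1), and y > 0
    have hy1' : y ≠ 1 := fun h => hc11 hx1' h
    have h1 : F ((x:ℝ), y) = ((0:ℝ), 1 - y) := by
      rw [hx1']
      simp only [F]
      rw [Prod.mk.injEq]
      constructor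
      · simp
      · rw [show (1:ℝ) + y - 1 * y = 1 by ring]
        simp
    have h2 : F^[2] ((x:ℝ), y) = ((1:ℝ), (0:ℝ)) := by
      rw [show (2:ℕ) = 1 + 1 from rfl, Function.iterate_add_apply]
      simp only [Function.iterate_one]
      rw [h1]
      simp only [F]
      rw [Prod.mk.injEq]
      constructor
      · have : (1:ℝ) - y ≠ 0 := fun h => hy1' (by linarith)
        simp [this]
      · simp
    exact main_cycle (k := 2) (Or.inl h2)
  rcases eq_or_lt_of_le hy1 with hy1' | hy1'
  · -- y = 1, x < 1
    have h1 : F ((x:ℝ), y) = (1 - x, (0:ℝ)) := by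
      rw [hy1']
      simp only [F]
      rw [Prod.mk.injEq]
      constructor
      · rw [show x + (1:ℝ) - x * 1 = 1 by ring]
        simp
      · simp
    have h2 : F^[2] ((x:ℝ), y) = ((0:ℝ), (1:ℝ)) := by
      rw [show (2:ℕ) = 1 + 1 from rfl, Function.iterate_add_apply]
      simp only [Function.iterate_one]
      rw [h1]
      simp only [F]
      rw [Prod.mk.injEq]
      constructor
      · simp
      · have : (1:ℝ) - x ≠ 0 := by
          intro h
          exact absurd hx1' (not_lt.2 (le_of_eq (by linarith)))
        simp [this]
    exact main_cycle (k := 2) (Or.inr h2)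
  -- interior case
  rcases lt_or_gt_of_ne hne with hlt | hgt
  · -- x < y : swapped order
    have h : Pord (Prod.swap ((x:ℝ), y)) := ⟨hx0', hlt, hy1'⟩
    obtain ⟨hmin, hev⟩ := main_ord' h
    exact ⟨hmin, ⟨_, Or.inr rfl, hev⟩⟩
  · -- y < x
    have h : Pord ((x:ℝ), y) := ⟨hy0', hgt, hx1'⟩
    obtain ⟨hmin, hev⟩ := main_ord h
    exact ⟨hmin, ⟨_, Or.inl rfl, hev⟩⟩
end

section
/- Fix δ > 0 and α ∈ ℝ, and for μ > 0 define N : ℂ → ℂ by N(0) := 0 and N(z) := −δ·tanh(μ|z|/δ)·e^{iα}·z/|z| for z ≠ 0. Then |N(z)| = δ·tanh(μ|z|/δ) for all z ≠ 0, and: (a) if 0 < μ ≤ 1 then δ·tanh(μr/δ) < r for every r > 0, and consequently Nⁿ(z) → 0 as n → ∞ for every z ∈ ℂ (the origin is a global attractor); (b) if μ > 1 then there is a unique r(μ) > 0 with δ·tanh(μ·r(μ)/δ) = r(μ), one has δ·tanh(μr/δ) > r for 0 < r < r(μ) and δ·tanh(μr/δ) < r for r > r(μ), the circle {z : |z| =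 r(μ)} is N-invariant, |N(z)| > |z| for 0 < |z| < r(μ) (the origin is a local repeller), and |Nⁿ(z)| → r(μ) as n → ∞ for every z ≠ 0; thus the family N undergoes a Neimark–Sacker bifurcation at μ = 1. -/
open Set Filter Topology

section Helpers

lemma my_continuous_tanh : Continuous Real.tanh := by
  have : Real.tanh = fun x => Real.sinh x / Real.cosh x :=
    funext fun x => Real.tanh_eq_sinh_div_cosh x
  rw [this]
  exact Real.continuous_sinh.div Real.continuous_cosh fun x => (Real.cosh_pos x).ne'

lemma my_hasDerivAt_tanh (x : ℝ) : HasDerivAt Real.tanh (1 / Real.cosh x ^ 2) x := by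
  have h := (Real.hasDerivAt_sinh x).div (Real.hasDerivAt_cosh x) (Real.cosh_pos x).ne'
  have heq : (Real.sinh / Real.cosh) = Real.tanh :=
    funext fun y => (Real.tanh_eq_sinh_div_cosh y).symm
  rw [heq] at h
  refine h.congr_deriv ?_
  have h2 := Real.cosh_sq_sub_sinh_sq x
  field_simp
  nlinarith [Real.cosh_pos x]

lemma my_tanh_strictMono : StrictMono Real.tanh := by
  have : ∀ x, 0 < deriv Real.tanh x := by
    intro x
    rw [(my_hasDerivAt_tanh x).deriv]
    positivity
  exact strictMono_of_deriv_pos this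

lemma my_tanh_nonneg {x : ℝ} (hx : 0 ≤ x) : 0 ≤ Real.tanh x := by
  rw [Real.tanh_eq_sinh_div_cosh]
  exact div_nonneg (by simpa using Real.sinh_le_sinh.mpr hx) (Real.cosh_pos x).le

lemma my_tanh_lt_one (x : ℝ) : Real.tanh x < 1 := by
  rw [Real.tanh_eq_sinh_div_cosh, div_lt_one (Real.cosh_pos x)]
  exact Real.sinh_lt_cosh x

lemma my_tanh_lt_self {x : ℝ} (hx : 0 < x) : Real.tanh x < x := by
  have key : Real.sinh x < x * Real.cosh x := by
    have hmono : StrictMonoOn (fun y => y * Real.cosh y - Real.sinh y) (Ici 0) := by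
      apply strictMonoOn_of_deriv_pos (convex_Ici 0)
      · fun_prop
      · intro y hy
        rw [interior_Ici] at hy
        have : HasDerivAt (fun y => y * Real.cosh y - Real.sinh y) (y * Real.sinh y) y := by
          have := ((hasDerivAt_id y).mul (Real.hasDerivAt_cosh y)).sub (Real.hasDerivAt_sinh y)
          refine this.congr_deriv ?_; simp only [id]; ring
        rw [this.deriv]
        have := Real.sinh_pos_iff.mpr hy
        exact mul_pos hy this
    have := hmono (self_mem_Ici) (mem_Ici.mpr hx.le) hx
    simpa using this
  rw [Real.tanh_eq_sinh_div_cosh, div_lt_iff₀ (Real.cosh_pos x)]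
  linarith

lemma my_q_anti : StrictAntiOn (fun x => Real.tanh x / x) (Ioi 0) := by
  apply strictAntiOn_of_deriv_neg (convex_Ioi 0)
  · exact (my_continuous_tanh.continuousOn).div continuousOn_id fun x hx => ne_of_gt hx
  · intro x hx
    rw [interior_Ioi] at hx
    have hx0 : (0:ℝ) < x := hx
    have hd : HasDerivAt (fun y => Real.tanh y / y)
        ((1 / Real.cosh x ^ 2 * x - Real.tanh x * 1) / x ^ 2) x :=
      (my_hasDerivAt_tanh x).div (hasDerivAt_id x) hx0.ne'
    rw [hd.deriv]
    apply div_neg_of_neg_of_pos _ (by positivity)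
    have hc := Real.cosh_pos x
    have hs : x < Real.sinh x * Real.cosh x := by
      have h1 : 2 * x < Real.sinh (2 * x) := Real.self_lt_sinh_iff.mpr (by linarith)
      rw [Real.sinh_two_mul] at h1
      linarith
    have heq : 1 / Real.cosh x ^ 2 * x - Real.tanh x * 1 =
        (x - Real.sinh x * Real.cosh x) / Real.cosh x ^ 2 := by
      rw [Real.tanh_eq_sinh_div_cosh]; field_simp
    rw [heq]
    exact div_neg_of_neg_of_pos (by linarith) (by positivity)

lemma my_q_lt {x y : ℝ} (hx : 0 < x) (hxy : x < y) : Real.tanh y / y < Real.tanh x / x :=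
  my_q_anti (Set.mem_Ioi.mpr hx) (Set.mem_Ioi.mpr (hx.trans hxy)) hxy

lemma my_q_inj {x y : ℝ} (hx : 0 < x) (hy : 0 < y)
    (h : Real.tanh x / x = Real.tanh y / y) : x = y :=
  my_q_anti.injOn (Set.mem_Ioi.mpr hx) (Set.mem_Ioi.mpr hy) h

lemma my_fix_of_tendsto {f : ℝ → ℝ} (hf : Continuous f) {a : ℕ → ℝ}
    (ha : ∀ n, a (n + 1) = f (a n)) {L : ℝ} (h : Tendsto a atTop (𝓝 L)) : f L = L := by
  have h1 : Tendsto (fun n => a (n + 1)) atTop (𝓝 L) := h.comp (tendsto_add_atTop_nat 1)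
  have h2 : Tendsto (fun n => f (a n)) atTop (𝓝 (f L)) := (hf.tendsto L).comp h
  simp only [← ha] at h2
  exact tendsto_nhds_unique h2 h1

lemma my_exists_u {μ : ℝ} (hμ : 1 < μ) : ∃ u : ℝ, 0 < u ∧ 1 / μ < Real.tanh u / u := by
  have hd : HasDerivAt Real.tanh 1 0 := by simpa using my_hasDerivAt_tanh 0
  have hslope := hasDerivAt_iff_tendsto_slope.mp hd
  have hslope' : Tendsto (slope Real.tanh 0) (𝓝[>] 0) (𝓝 1) :=
    hslope.mono_left (nhdsWithin_mono 0 fun x hx => ne_of_gt hx)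
  have hlt : (1:ℝ) / μ < 1 := by
    rw [div_lt_one (by linarith)]; exact hμ
  have hev : ∀ᶠ u in 𝓝[>] (0:ℝ), 1 / μ < slope Real.tanh 0 u :=
    hslope'.eventually (eventually_gt_nhds hlt)
  obtain ⟨u, hu1, hu2⟩ := (hev.and self_mem_nhdsWithin).exists
  refine ⟨u, hu2, ?_⟩
  have : slope Real.tanh 0 u = Real.tanh u / u := by simp [slope_def_field]
  rwa [this] at hu1

/-- General convergence lemma for orbits of a continuous strictly monotone map with a
unique positive fixed point. -/
lemma my_orbit_tendsto {f : ℝ → ℝ} (hf : Continuous f) (hmono : StrictMono f)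
    {L : ℝ} (hL : 0 < L) (hfix : f L = L)
    (huniq : ∀ r, 0 < r → f r = r → r = L)
    (hlow : ∀ r, 0 < r → r < L → r < f r)
    (hhigh : ∀ r, L < r → f r < r)
    {r0 : ℝ} (hr0 : 0 < r0) :
    Tendsto (fun n => f^[n] r0) atTop (𝓝 L) := by
  rcases lt_trichotomy r0 L with h | h | h
  · have hbound : ∀ n, r0 ≤ f^[n] r0 ∧ f^[n] r0 < L := by
      intro n; induction n with
      | zero => exact ⟨le_refl _, h⟩
      | succ n ih =>
        rw [Function.iterate_succ_apply']
        refine ⟨le_trans ih.1 (hlow _ (lt_of_lt_of_le hr0 ih.1) ih.2).le, ?_⟩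
        calc f (f^[n] r0) < f L := hmono ih.2
          _ = L := hfix
    have hm : Monotone fun n => f^[n] r0 := monotone_nat_of_le_succ fun n => by
      rw [Function.iterate_succ_apply']
      exact (hlow _ (lt_of_lt_of_le hr0 (hbound n).1) (hbound n).2).le
    have hbdd : BddAbove (range fun n => f^[n] r0) :=
      ⟨L, forall_mem_range.mpr fun n => (hbound n).2.le⟩
    have htend := tendsto_atTop_ciSup hm hbdd
    have hM0 : 0 < ⨆ n, f^[n] r0 :=
      lt_of_lt_of_le hr0 (by simpa using le_ciSup hbdd 0)
    have hfM : f (⨆ n, f^[n] r0) = ⨆ n, f^[n] r0 :=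
      my_fix_of_tendsto hf (fun n => Function.iterate_succ_apply' f n r0) htend
    rwa [huniq _ hM0 hfM] at htend
  · subst h
    simp only [Function.iterate_fixed hfix]
    exact tendsto_const_nhds
  · have hbound : ∀ n, L < f^[n] r0 := by
      intro n; induction n with
      | zero => exact h
      | succ n ih =>
        rw [Function.iterate_succ_apply']
        calc L = f L := hfix.symm
          _ < f (f^[n] r0) := hmono ih
    have hm : Antitone fun n => f^[n] r0 := antitone_nat_of_succ_le fun n => by
      rw [Function.iterate_succ_apply']
      exact (hhigh _ (hbound n)).le
    have hbdd : BddBelow (range fun n => f^[n] r0) :=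
      ⟨L, forall_mem_range.mpr fun n => (hbound n).le⟩
    have htend := tendsto_atTop_ciInf hm hbdd
    have hM0 : 0 < ⨅ n, f^[n] r0 :=
      lt_of_lt_of_le hL (le_ciInf fun n => (hbound n).le)
    have hfM : f (⨅ n, f^[n] r0) = ⨅ n, f^[n] r0 :=
      my_fix_of_tendsto hf (fun n => Function.iterate_succ_apply' f n r0) htend
    rwa [huniq _ hM0 hfM] at htend

end Helpers

/-- The Neimark–Sacker model map N(z) = −δ·tanh(μ|z|/δ)·e^{iα}·z/|z| (N(0) = 0). -/
noncomputable def N (δ μ α : ℝ) (z : ℂ) : ℂ :=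
  if z = 0 then 0
  else -(δ : ℂ) * (Real.tanh (μ * ‖z‖ / δ) : ℝ) *
    Complex.exp ((α : ℂ) * Complex.I) * z / (‖z‖ : ℂ)

lemma my_abs_N {δ μ α : ℝ} (hδ : 0 < δ) (hμ : 0 < μ) (z : ℂ) :
    ‖N δ μ α z‖ = δ * Real.tanh (μ * ‖z‖ / δ) := by
  by_cases hz : z = 0
  · simp [N, hz]
  · have hz' : ‖z‖ ≠ 0 := norm_ne_zero_iff.mpr hz
    have htn : 0 ≤ Real.tanh (μ * ‖z‖ / δ) :=
      my_tanh_nonneg (by positivity)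
    simp only [N, if_neg hz, norm_div, norm_mul, norm_neg, Complex.norm_real, Real.norm_eq_abs,
      Complex.norm_exp_ofReal_mul_I, abs_of_pos hδ, abs_of_nonneg htn, abs_norm]
    field_simp

lemma my_iter_abs {δ μ α : ℝ} (hδ : 0 < δ) (hμ : 0 < μ) (z : ℂ) (n : ℕ) :
    ‖(N δ μ α)^[n] z‖ =
      (fun r => δ * Real.tanh (μ * r / δ))^[n] (‖z‖) := by
  induction n with
  | zero => simp
  | succ n ih =>
    rw [Function.iterate_succ_apply', Function.iterate_succ_apply', my_abs_N hδ hμ, ih]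

lemma my_fcont {δ μ : ℝ} : Continuous fun r : ℝ => δ * Real.tanh (μ * r / δ) := by
  exact continuous_const.mul (my_continuous_tanh.comp (by continuity))

lemma my_fmono {δ μ : ℝ} (hδ : 0 < δ) (hμ : 0 < μ) :
    StrictMono fun r : ℝ => δ * Real.tanh (μ * r / δ) := fun r s h => by
  have h1 : μ * r / δ < μ * s / δ := by gcongr
  exact mul_lt_mul_of_pos_left (my_tanh_strictMono h1) hδ

/-- For δ > 0: |N(z)| = δ·tanh(μ|z|/δ) for z ≠ 0; (a) if 0 < μ ≤ 1 then
δ·tanh(μr/δ) < r for all r > 0 and all orbits of N tend to 0 (the origin is a global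
attractor); (b) if μ > 1 there is a unique r(μ) > 0 with δ·tanh(μ·r(μ)/δ) = r(μ),
δ·tanh(μr/δ) > r for 0 < r < r(μ) and < r for r > r(μ), the circle |z| = r(μ) is
N-invariant, |N(z)| > |z| for 0 < |z| < r(μ) (the origin is a local repeller), and
|Nⁿ(z)| → r(μ) for every z ≠ 0: a Neimark–Sacker bifurcation at μ = 1. -/
theorem neimark_sacker_model :
    ∀ δ α : ℝ, 0 < δ →
      (∀ μ : ℝ, 0 < μ → ∀ z : ℂ, z ≠ 0 →
        ‖N δ μ α z‖ = δ * Real.tanh (μ * ‖z‖ / δ)) ∧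
      (∀ μ : ℝ, 0 < μ → μ ≤ 1 →
        (∀ r : ℝ, 0 < r → δ * Real.tanh (μ * r / δ) < r) ∧
        (∀ z : ℂ, Tendsto (fun n : ℕ => (N δ μ α)^[n] z) atTop (𝓝 0))) ∧
      (∀ μ : ℝ, 1 < μ →
        ∃ rμ : ℝ, 0 < rμ ∧ δ * Real.tanh (μ * rμ / δ) = rμ ∧
          (∀ r : ℝ, 0 < r → δ * Real.tanh (μ * r / δ) = r → r = rμ) ∧
          (∀ r : ℝ, 0 < r → r < rμ → r < δ * Real.tanh (μ * r / δ)) ∧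
          (∀ r : ℝ, rμ < r → δ * Real.tanh (μ * r / δ) < r) ∧
          (∀ z : ℂ, ‖z‖ = rμ → ‖N δ μ α z‖ = rμ) ∧
          (∀ z : ℂ, 0 < ‖z‖ → ‖z‖ < rμ →
            ‖z‖ < ‖N δ μ α z‖) ∧
          (∀ z : ℂ, z ≠ 0 →
            Tendsto (fun n : ℕ => ‖(N δ μ α)^[n] z‖) atTop (𝓝 rμ))) := by
  intro δ α hδ
  refine ⟨fun μ hμ z _ => my_abs_N hδ hμ z, ?_, ?_⟩
  · -- part (a)
    intro μ hμ hμ1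
    have hflt : ∀ r : ℝ, 0 < r → δ * Real.tanh (μ * r / δ) < r := by
      intro r hr
      have h1 : Real.tanh (μ * r / δ) < μ * r / δ := my_tanh_lt_self (by positivity)
      have h2 : δ * Real.tanh (μ * r / δ) < δ * (μ * r / δ) :=
        mul_lt_mul_of_pos_left h1 hδ
      have h3 : δ * (μ * r / δ) = μ * r := by field_simp
      nlinarith
    refine ⟨hflt, ?_⟩
    intro z
    rw [tendsto_zero_iff_norm_tendsto_zero]
    have hiter : (fun n : ℕ => ‖(N δ μ α)^[n] z‖) =
        fun n => (fun r => δ * Real.tanh (μ * r / δ))^[n] (‖z‖) :=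
      funext fun n => my_iter_abs hδ hμ z n
    rw [hiter]
    set f : ℝ → ℝ := fun r => δ * Real.tanh (μ * r / δ) with hf
    have hf0 : f 0 = 0 := by simp [hf]
    by_cases hz : ‖z‖ = 0
    · rw [hz]
      simp only [Function.iterate_fixed hf0]
      exact tendsto_const_nhds
    · have hz0 : 0 < ‖z‖ := lt_of_le_of_ne (norm_nonneg z) (Ne.symm hz)
      have hpos : ∀ n, 0 ≤ f^[n] (‖z‖) := by
        intro n; induction n with
        | zero => exact hz0.le
        | succ n ih =>
          rw [Function.iterate_succ_apply', hf]
          have : 0 ≤ Real.tanh (μ * f^[n] (‖z‖) / δ) :=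
            my_tanh_nonneg (by positivity)
          positivity
      have hm : Antitone fun n => f^[n] (‖z‖) := antitone_nat_of_succ_le fun n => by
        rw [Function.iterate_succ_apply']
        rcases eq_or_lt_of_le (hpos n) with h | h
        · rw [← h, hf0]
        · exact (hflt _ h).le
      have hbdd : BddBelow (range fun n => f^[n] (‖z‖)) :=
        ⟨0, forall_mem_range.mpr hpos⟩
      have htend := tendsto_atTop_ciInf hm hbdd
      have hM0 : 0 ≤ ⨅ n, f^[n] (‖z‖) := le_ciInf hpos
      have hfM : f (⨅ n, f^[n] (‖z‖)) = ⨅ n, f^[n] (‖z‖) :=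
        my_fix_of_tendsto my_fcont (fun n => Function.iterate_succ_apply' f n _) htend
      have : (⨅ n, f^[n] (‖z‖)) = 0 := by
        rcases eq_or_lt_of_le hM0 with h | h
        · exact h.symm
        · exact absurd hfM (ne_of_lt (hflt _ h))
      rwa [this] at htend
  · -- part (b)
    intro μ hμ
    have hμ0 : 0 < μ := lt_trans one_pos hμ
    set f : ℝ → ℝ := fun r => δ * Real.tanh (μ * r / δ) with hfdef
    obtain ⟨u, hu, hqu⟩ := my_exists_u hμ
    set r0 : ℝ := δ * u / μ with hr0def
    have hr0 : 0 < r0 := by positivity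
    have hargr0 : μ * r0 / δ = u := by rw [hr0def]; field_simp
    have hu_lt : u < μ * Real.tanh u := by
      have := (div_lt_div_iff₀ hμ0 hu).mp hqu
      linarith
    have hfr0 : r0 < f r0 := by
      rw [hfdef]
      simp only [hargr0]
      rw [hr0def, div_lt_iff₀ hμ0]
      nlinarith
    set b : ℝ := r0 + δ with hbdef
    have hfb : f b < b := by
      have : Real.tanh (μ * b / δ) < 1 := my_tanh_lt_one _
      have h2 : f b < δ * 1 := mul_lt_mul_of_pos_left this hδ
      rw [hbdef]; nlinarith
    have hgc : ContinuousOn (fun r => f r - r) (Icc r0 b) :=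
      (my_fcont.sub continuous_id).continuousOn
    have hsub := intermediate_value_Icc' (by linarith : r0 ≤ b) hgc
    have hmem : (0:ℝ) ∈ Icc (f b - b) (f r0 - r0) := ⟨by linarith, by linarith⟩
    obtain ⟨rμ, hrmem, hgr⟩ := hsub hmem
    have hrpos : 0 < rμ := lt_of_lt_of_le hr0 hrmem.1
    have hfix : f rμ = rμ := by
      have h := hgr
      simp only [sub_eq_zero] at h
      exact h
    -- key: fixed points all satisfy q (μ r / δ) = 1/μ
    have hkey : ∀ r : ℝ, 0 < r → f r = r →
        Real.tanh (μ * r / δ) / (μ * r / δ) = 1 / μ := by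
      intro r hr hfr
      have ht : Real.tanh (μ * r / δ) = r / δ := by
        rw [hfdef] at hfr
        field_simp
        linarith [hfr]
      rw [ht]
      field_simp
    have huniq : ∀ r : ℝ, 0 < r → f r = r → r = rμ := by
      intro r hr hfr
      have h1 := hkey r hr hfr
      have h2 := hkey rμ hrpos hfix
      have hinj : μ * r / δ = μ * rμ / δ :=
        my_q_inj (by positivity) (by positivity) (h1.trans h2.symm)
      field_simp [hδ.ne'] at hinj
      exact hinj
    have hlow : ∀ r : ℝ, 0 < r → r < rμ → r < f r := by
      intro r hr hrlt
      have hq2 := hkey rμ hrpos hfix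
      have hqgt : Real.tanh (μ * rμ / δ) / (μ * rμ / δ) < Real.tanh (μ * r / δ) / (μ * r / δ) :=
        my_q_lt (by positivity) (by gcongr)
      rw [hq2] at hqgt
      set v : ℝ := μ * r / δ with hvdef
      have hv : 0 < v := by positivity
      have hv_lt : v < μ * Real.tanh v := by
        have := (div_lt_div_iff₀ hμ0 hv).mp hqgt
        linarith
      have hrv : r * μ = δ * v := by rw [hvdef]; field_simp
      rw [hfdef]
      have h3 : δ * v < δ * (μ * Real.tanh v) := mul_lt_mul_of_pos_left hv_lt hδ
      have h4 : r * μ < (δ * Real.tanh v) * μ := by nlinarith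
      exact lt_of_mul_lt_mul_right h4 hμ0.le
    have hhigh : ∀ r : ℝ, rμ < r → f r < r := by
      intro r hrlt
      have hr : 0 < r := lt_trans hrpos hrlt
      have hq2 := hkey rμ hrpos hfix
      have hqlt : Real.tanh (μ * r / δ) / (μ * r / δ) < Real.tanh (μ * rμ / δ) / (μ * rμ / δ) :=
        my_q_lt (by positivity) (by gcongr)
      rw [hq2] at hqlt
      set v : ℝ := μ * r / δ with hvdef
      have hv : 0 < v := by positivity
      have hv_gt : μ * Real.tanh v < v := by
        have := (div_lt_div_iff₀ hv hμ0).mp hqlt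
        linarith
      have hrv : r * μ = δ * v := by rw [hvdef]; field_simp
      rw [hfdef]
      have h3 : δ * (μ * Real.tanh v) < δ * v := mul_lt_mul_of_pos_left hv_gt hδ
      have h4 : (δ * Real.tanh v) * μ < r * μ := by nlinarith
      exact lt_of_mul_lt_mul_right h4 hμ0.le
    refine ⟨rμ, hrpos, hfix, huniq, hlow, hhigh, ?_, ?_, ?_⟩
    · intro z hz
      rw [my_abs_N hδ hμ0, hz]
      exact hfix
    · intro z h0 h1
      rw [my_abs_N hδ hμ0]
      exact hlow _ h0 h1
    · intro z hz
      have hiter : (fun n : ℕ => ‖(N δ μ α)^[n] z‖) =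
          fun n => f^[n] (‖z‖) := funext fun n => my_iter_abs hδ hμ0 z n
      rw [hiter]
      exact my_orbit_tendsto my_fcont (my_fmono hδ hμ0) hrpos hfix huniq hlow hhigh
        (norm_pos_iff.mpr hz)
end
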